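/- arXiv:2503.17861 — 2 statements merged into one kernel-verified Lean document; each statement's English description precedes it below -/
import Mathlib

section
/- Let J be a Jordan curve in K² with more than four points, let m ∈ S_J, and write A(m) ∩ J = {a, b, c}, where a and b are both closed points (both coordinates even) and c is an open point (both coordinates odd), or symmetrically a and b are both open and c is closed. Then: (i) J_m = (J ∖ {c}) ∪ {m} is a Jordan curve; (ii) S_{J_m} ⊆ S_J and m ∉ S_{J_m}. -/
open TopologicalSpace

/-- Basic (minimal) neighborhoods generating the Khalimsky topology on ℤ. -/
def khN (n : ℤ) : Set ℤ := if Odd n then {n} else {n - 1, n, n + 1}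

/-- The Khalimsky (digital) topology on the integers. -/
def khLine : TopologicalSpace ℤ := generateFrom (Set.range khN)

/-- The Khalimsky topology on the digital plane ℤ × ℤ (product topology). -/
def khPlane : TopologicalSpace (ℤ × ℤ) :=
  @instTopologicalSpaceProd ℤ ℤ khLine khLine

/-- A point of the digital plane is pure if both coordinates have the same parity. -/
def IsPure (p : ℤ × ℤ) : Prop := p.1 % 2 = p.2 % 2

/-- A point of the digital plane is mixed if it is not pure. -/
def IsMixed (p : ℤ × ℤ) : Prop := ¬ IsPure p

/-- A closed (pure) point: both coordinates even. -/
def IsClosedPt (p : ℤ × ℤ) : Prop := Even p.1 ∧ Even p.2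

/-- An open (pure) point: both coordinates odd. -/
def IsOpenPt (p : ℤ × ℤ) : Prop := Odd p.1 ∧ Odd p.2

/-- The minimal open neighborhood N(x) of a point in the digital plane. -/
def minN (x : ℤ × ℤ) : Set (ℤ × ℤ) := ⋂₀ {U : Set (ℤ × ℤ) | khPlane.IsOpen U ∧ x ∈ U}

/-- The closure cl(x) of a singleton in the digital plane. -/
def clPt (x : ℤ × ℤ) : Set (ℤ × ℤ) := @closure (ℤ × ℤ) khPlane {x}

/-- The adjacency set A(x) of a point of the digital plane. -/
def AdjSet (x : ℤ × ℤ) : Set (ℤ × ℤ) :=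
  {y | y ≠ x ∧ @IsConnected (ℤ × ℤ) khPlane {x, y}}

/-- An arc: a subset of the digital plane homeomorphic (in the subspace topology)
to a finite interval of the Khalimsky line. -/
def IsArc (C : Set (ℤ × ℤ)) : Prop :=
  ∃ a b : ℤ,
    Nonempty (@Homeomorph (↥C) (↥(Set.Icc a b))
      (TopologicalSpace.induced Subtype.val khPlane)
      (TopologicalSpace.induced Subtype.val khLine))

/-- z is an endpoint of the arc C: it has exactly one adjacent point within C. -/
def IsEndpointOf (z : ℤ × ℤ) (C : Set (ℤ × ℤ)) : Prop :=
  z ∈ C ∧ (AdjSet z ∩ C).encard = 1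

/-- A Jordan curve in the digital plane. -/
def IsJordanCurve (J : Set (ℤ × ℤ)) : Prop :=
  @IsConnected (ℤ × ℤ) khPlane J ∧ 4 ≤ J.encard ∧ ∀ x ∈ J, IsArc (J \ {x})

/-- The slant embedding Γ(x,y) = (x+y, y−x) of the Rosenfeld plane into the digital plane. -/
def Γmap (p : ℤ × ℤ) : ℤ × ℤ := (p.1 + p.2, p.2 - p.1)

/-- The operator Γ* turning subsets of ℤ² into subsets of the digital plane. -/
def ΓStar (A : Set (ℤ × ℤ)) : Set (ℤ × ℤ) :=
  Γmap '' A ∪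
    {x | IsMixed x ∧ (minN x ⊆ Γmap '' A ∪ {x} ∨ clPt x ⊆ Γmap '' A ∪ {x})}

/-- 8-adjacency in ℤ². -/
def Adj8 (p q : ℤ × ℤ) : Prop := p ≠ q ∧ |p.1 - q.1| ≤ 1 ∧ |p.2 - q.2| ≤ 1

/-- 4-adjacency in ℤ². -/
def Adj4 (p q : ℤ × ℤ) : Prop := p ≠ q ∧ |p.1 - q.1| + |p.2 - q.2| = 1

/-- The 8-neighbours of x within C. -/
def nbrs8 (C : Set (ℤ × ℤ)) (x : ℤ × ℤ) : Set (ℤ × ℤ) := {y ∈ C | Adj8 x y}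

/-- The 4-neighbours of x within C. -/
def nbrs4 (C : Set (ℤ × ℤ)) (x : ℤ × ℤ) : Set (ℤ × ℤ) := {y ∈ C | Adj4 x y}

/-- x is an 8-endpoint of C. -/
def Is8Endpoint (C : Set (ℤ × ℤ)) (x : ℤ × ℤ) : Prop :=
  x ∈ C ∧ (nbrs8 C x).encard = 1

/-- x is a 4-endpoint of C. -/
def Is4Endpoint (C : Set (ℤ × ℤ)) (x : ℤ × ℤ) : Prop :=
  x ∈ C ∧ (nbrs4 C x).encard = 1

/-- An 8-path: a finite set with exactly two 8-endpoints, every other point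
having exactly two 8-adjacent points in the set. -/
def Is8Path (C : Set (ℤ × ℤ)) : Prop :=
  C.Finite ∧ {x | Is8Endpoint C x}.encard = 2 ∧
    ∀ x ∈ C, ¬ Is8Endpoint C x → (nbrs8 C x).encard = 2

/-- A 4-path. -/
def Is4Path (C : Set (ℤ × ℤ)) : Prop :=
  C.Finite ∧ {x | Is4Endpoint C x}.encard = 2 ∧
    ∀ x ∈ C, ¬ Is4Endpoint C x → (nbrs4 C x).encard = 2

/-- A closed 8-curve: every point has exactly two 8-adjacent points in the set. -/
def Is8ClosedCurve (C : Set (ℤ × ℤ)) : Prop :=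
  C.Finite ∧ ∀ x ∈ C, (nbrs8 C x).encard = 2

/-- A closed 4-curve. -/
def Is4ClosedCurve (C : Set (ℤ × ℤ)) : Prop :=
  C.Finite ∧ ∀ x ∈ C, (nbrs4 C x).encard = 2

/-- 8-connectedness: there is no partition into two nonempty pieces that are
not 8-adjacent to each other. -/
def Conn8 (S : Set (ℤ × ℤ)) : Prop :=
  ¬ ∃ A B : Set (ℤ × ℤ), A.Nonempty ∧ B.Nonempty ∧ A ∪ B = S ∧ A ∩ B = ∅ ∧
      ∀ a ∈ A, ∀ b ∈ B, ¬ Adj8 a b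

/-- 4-connectedness. -/
def Conn4 (S : Set (ℤ × ℤ)) : Prop :=
  ¬ ∃ A B : Set (ℤ × ℤ), A.Nonempty ∧ B.Nonempty ∧ A ∪ B = S ∧ A ∩ B = ∅ ∧
      ∀ a ∈ A, ∀ b ∈ B, ¬ Adj4 a b

/-- T is a 4-component of S: a maximal 4-connected subset of S. -/
def Is4CompOf (T S : Set (ℤ × ℤ)) : Prop :=
  T ⊆ S ∧ Conn4 T ∧ ∀ T' : Set (ℤ × ℤ), T ⊆ T' → T' ⊆ S → Conn4 T' → T' = T

/-- U is a connected component of S in the digital plane. -/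
def IsCompOf (U S : Set (ℤ × ℤ)) : Prop :=
  ∃ x ∈ S, @connectedComponentIn (ℤ × ℤ) khPlane S x = U

/-- The set S_J of mixed points of Γ*(Γ⁻¹(J)) having exactly three adjacent points in J. -/
def SJ (J : Set (ℤ × ℤ)) : Set (ℤ × ℤ) :=
  {m | m ∈ ΓStar (Γmap ⁻¹' J) ∧ IsMixed m ∧ (AdjSet m ∩ J).encard = 3}

/-!
A point of a Jordan curve with more than four points has at most two neighbours on it. Hence the
neighbours of `c` on `J` are exactly `a` and `b`, and the other points of `J` are adjacent to
neither `c` nor `m`; since `m` is related to `a` and `b` by specialization exactly as `c` is, the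
transposition `c ↔ m` preserves specialization between points of `J`. The Khalimsky plane is
Alexandrov-discrete, so subspace topologies are determined by specialization, and the transposition
maps `J` and each `J \ {x}` homeomorphically onto `J_m` and `J_m \ {x'}`: this gives (i).

For (ii), `m` has only `a` and `b` as neighbours on `J_m`. If a mixed `m' ∈ S_{J_m}` had `c` as a
neighbour, its three other neighbours would lie on `J`; the two of type opposite to `c` are
adjacent to `c`, hence are `a` and `b`, and two distinct points of the same type determine the mixed
point between them, so `m' = m`. Otherwise `A(m') ∩ J_m = A(m') ∩ J`.
-/

open Function Set Topology

theorem Set.encard_pair_le {α : Type*} (x y : α) : ({x, y} : Set α).encard ≤ 2 :=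
  (encard_insert_le _ _).trans (by rw [encard_singleton]; rfl)

theorem Set.ne_of_encard_eq_three {α : Type*} {a b c : α}
    (h : ({a, b, c} : Set α).encard = 3) : a ≠ b ∧ a ≠ c ∧ b ≠ c := by
  refine ⟨?_, ?_, ?_⟩ <;> rintro rfl <;>
    simp only [insert_eq_of_mem, mem_insert_iff, mem_singleton_iff, true_or, or_true] at h <;>
    exact absurd (h.symm.trans_le (encard_pair_le _ _)) (by norm_num)

theorem Set.diff_singleton_subset_of_encard_inter {α : Type*} {s t : Set α} {c : α}
    (hs : s.encard = 4) (hc : c ∈ s) (hst : (s ∩ (t \ {c})).encard = 3) : s \ {c} ⊆ t := by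
  have hsc : (s \ {c}).encard = 3 := by rw [encard_sdiff_singleton_of_mem hc, hs]; rfl
  have hsub : s ∩ (t \ {c}) ⊆ s \ {c} := fun x hx => ⟨hx.1, hx.2.2⟩
  rw [← (finite_of_encard_eq_coe hst).eq_of_subset_of_encard_le hsub (hsc.trans hst.symm).le]
  exact fun x hx => hx.2.1

section AlexandrovDiscrete

variable {X Y : Type*} [TopologicalSpace X] [TopologicalSpace Y]

theorem isConnected_pair_iff {x y : X} : IsConnected ({x, y} : Set X) ↔ x ⤳ y ∨ y ⤳ x := by
  refine ⟨fun h => ?_, fun h => ?_⟩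
  · by_contra! hxy
    obtain ⟨U, hU, hyU, hxU⟩ := not_specializes_iff_exists_open.mp hxy.1
    obtain ⟨V, hV, hxV, hyV⟩ := not_specializes_iff_exists_open.mp hxy.2
    obtain ⟨z, hz, hzV, hzU⟩ := h.isPreconnected V U hV hU
      (by rintro z (rfl | rfl) <;> simp [*]) ⟨x, by simp, hxV⟩ ⟨y, by simp, hyU⟩
    rcases hz with rfl | rfl <;> contradiction
  · have hjoin : ∀ {u v : X}, u ⤳ v → IsPathConnected ({u, v} : Set X) := fun {u v} huv =>
      ⟨u, mem_insert _ _, by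
        rintro z (rfl | rfl)
        · exact JoinedIn.refl (mem_insert _ _)
        · exact huv.joinedIn (mem_insert _ _) (mem_insert_of_mem _ rfl)⟩
    rcases h with h | h
    · exact (hjoin h).isConnected
    · rw [pair_comm]; exact (hjoin h).isConnected

theorem specializes_swap_iff [DecidableEq X] {S : Set X} {c m : X} (hm : m ∉ S)
    (hcm : ∀ y ∈ S, y ≠ c → (y ⤳ c ↔ y ⤳ m) ∧ (c ⤳ y ↔ m ⤳ y)) {x y : X} (hx : x ∈ S)
    (hy : y ∈ S) : Equiv.swap c m x ⤳ Equiv.swap c m y ↔ x ⤳ y := by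
  have hxm : x ≠ m := ne_of_mem_of_not_mem hx hm
  have hym : y ≠ m := ne_of_mem_of_not_mem hy hm
  rcases eq_or_ne x c with hxc | hxc <;> rcases eq_or_ne y c with hyc | hyc
  · rw [hxc, hyc]
    exact iff_of_true specializes_rfl specializes_rfl
  · rw [hxc, Equiv.swap_apply_left, Equiv.swap_apply_of_ne_of_ne hyc hym]
    exact (hcm y hy hyc).2.symm
  · rw [hyc, Equiv.swap_apply_left, Equiv.swap_apply_of_ne_of_ne hxc hxm]
    exact (hcm x hx hxc).1.symm
  · rw [Equiv.swap_apply_of_ne_of_ne hxc hxm, Equiv.swap_apply_of_ne_of_ne hyc hym]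

variable [AlexandrovDiscrete X]

theorem continuous_of_forall_specializes {f : X → Y} (hf : ∀ x y, x ⤳ y → f x ⤳ f y) :
    Continuous f :=
  continuous_def.mpr fun _ hU => isOpen_iff_forall_specializes.mpr fun x y hxy hy =>
    (hf x y hxy).mem_open hU hy

variable [AlexandrovDiscrete Y]

def Homeomorph.ofSpecializesIff (e : X ≃ Y) (he : ∀ x y, e x ⤳ e y ↔ x ⤳ y) : X ≃ₜ Y where
  toEquiv := e
  continuous_toFun := continuous_of_forall_specializes fun x y => (he x y).mpr
  continuous_invFun := continuous_of_forall_specializes fun x y hxy => by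
    show e.symm x ⤳ e.symm y
    rwa [← he, e.apply_symm_apply, e.apply_symm_apply]

def Homeomorph.imageOfSpecializesIff (e : X ≃ Y) (S : Set X)
    (he : ∀ x ∈ S, ∀ y ∈ S, e x ⤳ e y ↔ x ⤳ y) : S ≃ₜ e '' S :=
  .ofSpecializesIff (e.image S) fun x y => by
    simp only [subtype_specializes_iff]
    exact he x x.2 y y.2

end AlexandrovDiscrete

theorem mem_khN_iff {j n : ℤ} : j ∈ khN n ↔ j = n ∨ (n % 2 = 0 ∧ (j = n - 1 ∨ j = n + 1)) := by
  unfold khN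
  split_ifs with h
  · simp only [mem_singleton_iff]; grind
  · simp only [mem_insert_iff, mem_singleton_iff]; grind

theorem khN_subset_of_mem {j n : ℤ} (h : j ∈ khN n) : khN j ⊆ khN n := fun i hi => by
  rw [mem_khN_iff] at h hi ⊢
  omega

theorem khLine_isOpen_iff {U : Set ℤ} : IsOpen[khLine] U ↔ ∀ n ∈ U, khN n ⊆ U := by
  refine ⟨fun hU => ?_, fun hU => ?_⟩
  · induction hU with
    | basic s hs =>
      obtain ⟨k, rfl⟩ := hs
      exact fun n => khN_subset_of_mem
    | univ => exact fun n _ => subset_univ _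
    | inter s t _ _ ihs iht => exact fun n hn => subset_inter (ihs n hn.1) (iht n hn.2)
    | sUnion _ _ ih =>
      rintro n ⟨s, hsS, hns⟩
      exact (ih s hsS n hns).trans (subset_sUnion_of_mem hsS)
  · let := khLine
    refine isOpen_iff_forall_mem_open.mpr fun n hn => ⟨khN n, hU n hn, ?_, ?_⟩
    · exact isOpen_generateFrom_of_mem ⟨n, rfl⟩
    · exact mem_khN_iff.mpr (Or.inl rfl)

theorem khLine_alexandrovDiscrete : @AlexandrovDiscrete ℤ khLine :=
  @AlexandrovDiscrete.mk ℤ khLine fun _ hS => khLine_isOpen_iff.mpr fun n hn =>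
    subset_sInter fun s hs => khLine_isOpen_iff.mp (hS s hs) n (hn s hs)

theorem khLine_specializes_iff {i j : ℤ} : @Specializes ℤ khLine i j ↔ i ∈ khN j := by
  let := khLine
  refine ⟨fun h => h.mem_open ?_ (mem_khN_iff.mpr (Or.inl rfl)), fun h => ?_⟩
  · exact khLine_isOpen_iff.mpr fun n => khN_subset_of_mem
  · exact specializes_iff_forall_open.mpr fun U hU hj => khLine_isOpen_iff.mp hU j hj h

theorem khPlane_alexandrovDiscrete : @AlexandrovDiscrete (ℤ × ℤ) khPlane :=
  let := khLine
  haveI := khLine_alexandrovDiscrete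
  Prod.instAlexandrovDiscrete

local notation:50 x:51 " ⤳ₖ " y:51 => @Specializes (ℤ × ℤ) khPlane x y

theorem khPlane_specializes_iff {x y : ℤ × ℤ} : x ⤳ₖ y ↔ x.1 ∈ khN y.1 ∧ x.2 ∈ khN y.2 := by
  let := khLine
  rw [← khLine_specializes_iff, ← khLine_specializes_iff]
  exact specializes_prod

theorem mem_adjSet_iff {x y : ℤ × ℤ} : y ∈ AdjSet x ↔ y ≠ x ∧ (x ⤳ₖ y ∨ y ⤳ₖ x) :=
  and_congr_right fun _ => @isConnected_pair_iff _ khPlane x y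

theorem IsArc.of_homeomorph {S T : Set (ℤ × ℤ)} (h : @Homeomorph S T
      (induced Subtype.val khPlane) (induced Subtype.val khPlane)) (hS : IsArc S) : IsArc T := by
  obtain ⟨p, q, ⟨e⟩⟩ := hS
  let := khLine
  let := khPlane
  exact ⟨p, q, ⟨h.symm.trans e⟩⟩

theorem IsArc.eq_or_eq_of_mem_adjSet {C : Set (ℤ × ℤ)} (hC : IsArc C) {x a b z : ℤ × ℤ}
    (hx : x ∈ C) (ha : a ∈ AdjSet x ∩ C) (hb : b ∈ AdjSet x ∩ C) (hab : a ≠ b)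
    (hz : z ∈ AdjSet x ∩ C) : z = a ∨ z = b := by
  let := khLine
  let := khPlane
  obtain ⟨p, q, ⟨e⟩⟩ := hC
  let f : C → ℤ := fun y => e y
  have hf : Injective f := Subtype.val_injective.comp e.injective
  have hne : ∀ {y y'} (hy : y ∈ C) (hy' : y' ∈ C), y ≠ y' → f ⟨y, hy⟩ ≠ f ⟨y', hy'⟩ :=
    fun _ _ h => hf.ne fun h' => h (congrArg Subtype.val h')
  have hsp : ∀ y y' : C, (y : ℤ × ℤ) ⤳ₖ y' ↔ f y ∈ khN (f y') := fun y y' => by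
    rw [← khLine_specializes_iff, ← subtype_specializes_iff (e y), e.isInducing.specializes_iff]
    exact (subtype_specializes_iff y y').symm
  have hadj : ∀ y (hy : y ∈ AdjSet x ∩ C), f ⟨y, hy.2⟩ ≠ f ⟨x, hx⟩ ∧
      (f ⟨y, hy.2⟩ ∈ khN (f ⟨x, hx⟩) ∨ f ⟨x, hx⟩ ∈ khN (f ⟨y, hy.2⟩)) := fun y hy => by
    obtain ⟨hyx, hyx'⟩ := mem_adjSet_iff.mp hy.1
    exact ⟨hne hy.2 hx hyx, by rwa [← hsp, ← hsp, or_comm]⟩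
  -- on the Khalimsky line the only points adjacent to `k` are `k - 1` and `k + 1`
  by_contra! hza
  have := hadj a ha
  have := hadj b hb
  have := hadj z hz
  have := hne ha.2 hb.2 hab
  have := hne hz.2 ha.2 hza.1
  have := hne hz.2 hb.2 hza.2
  simp only [mem_khN_iff] at *
  omega

theorem IsJordanCurve.eq_or_eq_of_mem_adjSet {J : Set (ℤ × ℤ)} (hJ : IsJordanCurve J)
    (hcard : 4 < J.encard) {x a b z : ℤ × ℤ} (hx : x ∈ J) (ha : a ∈ AdjSet x ∩ J)
    (hb : b ∈ AdjSet x ∩ J) (hab : a ≠ b) (hz : z ∈ AdjSet x ∩ J) : z = a ∨ z = b := by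
  classical
  obtain ⟨w, hwJ, hw⟩ : ∃ w ∈ J, w ∉ ({x, a, b, z} : Finset (ℤ × ℤ)) := by
    by_contra! h
    have hle := (encard_mono h).trans_eq (encard_coe_eq_coe_finsetCard _)
    exact hcard.not_ge (hle.trans (by exact_mod_cast Finset.card_le_four))
  simp only [Finset.mem_insert, Finset.mem_singleton, not_or] at hw
  have hmem : ∀ {y}, y ∈ J → y ≠ w → y ∈ J \ {w} := fun hy hyw => ⟨hy, hyw⟩
  exact (hJ.2.2 w hwJ).eq_or_eq_of_mem_adjSet (hmem hx (Ne.symm hw.1))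
    ⟨ha.1, hmem ha.2 (Ne.symm hw.2.1)⟩ ⟨hb.1, hmem hb.2 (Ne.symm hw.2.2.1)⟩ hab
    ⟨hz.1, hmem hz.2 (Ne.symm hw.2.2.2)⟩

theorem IsJordanCurve.image_of_specializes_iff {J : Set (ℤ × ℤ)} (hJ : IsJordanCurve J)
    (e : ℤ × ℤ ≃ ℤ × ℤ) (he : ∀ x ∈ J, ∀ y ∈ J, e x ⤳ₖ e y ↔ x ⤳ₖ y) :
    IsJordanCurve (e '' J) := by
  let := khPlane
  have := khPlane_alexandrovDiscrete
  refine ⟨hJ.1.image _ ?_, by rw [e.injective.encard_image]; exact hJ.2.1, ?_⟩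
  · refine continuousOn_iff_continuous_domRestrict.mpr (continuous_of_forall_specializes ?_)
    intro x y hxy
    exact (he x x.2 y y.2).mpr (subtype_specializes_iff x y |>.mp hxy)
  · rintro _ ⟨x, hx, rfl⟩
    rw [← image_singleton, ← image_sdiff e.injective]
    exact (hJ.2.2 x hx).of_homeomorph (.imageOfSpecializesIff e _ fun y hy y' hy' =>
      he y hy.1 y' hy'.1)

theorem isClosedPt_iff {p : ℤ × ℤ} : IsClosedPt p ↔ p.1 % 2 = 0 ∧ p.2 % 2 = 0 := by
  simp only [IsClosedPt, Int.even_iff]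

theorem isOpenPt_iff {p : ℤ × ℤ} : IsOpenPt p ↔ p.1 % 2 = 1 ∧ p.2 % 2 = 1 := by
  simp only [IsOpenPt, Int.odd_iff]

theorem isPure_Γmap (z : ℤ × ℤ) : IsPure (Γmap z) := by
  simp only [IsPure, Γmap]
  omega

theorem ΓStar_mono {A B : Set (ℤ × ℤ)} (h : A ⊆ B) : ΓStar A ⊆ ΓStar B := by
  rintro x (hx | ⟨hmix, hN | hcl⟩)
  · exact Or.inl (image_mono h hx)
  · exact Or.inr ⟨hmix, Or.inl (hN.trans (union_subset_union_left _ (image_mono h)))⟩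
  · exact Or.inr ⟨hmix, Or.inr (hcl.trans (union_subset_union_left _ (image_mono h)))⟩

theorem IsMixed.adjSet_eq {m : ℤ × ℤ} (hm : IsMixed m) :
    AdjSet m = {(m.1, m.2 - 1), (m.1, m.2 + 1), (m.1 - 1, m.2), (m.1 + 1, m.2)} := by
  ext y
  simp only [IsMixed, IsPure] at hm
  simp only [mem_adjSet_iff, khPlane_specializes_iff, mem_khN_iff, mem_insert_iff,
    mem_singleton_iff, ne_eq, Prod.ext_iff]
  omega

theorem IsMixed.encard_adjSet {m : ℤ × ℤ} (hm : IsMixed m) : (AdjSet m).encard = 4 := by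
  rw [hm.adjSet_eq, encard_insert_of_notMem, encard_insert_of_notMem, encard_pair]
  · rfl
  all_goals simp only [mem_insert_iff, mem_singleton_iff, ne_eq, Prod.ext_iff]; omega

theorem IsMixed.notMem_adjSet {m m' : ℤ × ℤ} (hm : IsMixed m) (hm' : IsMixed m') :
    m ∉ AdjSet m' := by
  rw [hm'.adjSet_eq]
  simp only [IsMixed, IsPure] at hm hm'
  simp only [mem_insert_iff, mem_singleton_iff, Prod.ext_iff]
  omega

theorem IsMixed.mem_adjSet_of_mem_adjSet {m u v : ℤ × ℤ} (hm : IsMixed m)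
    (hu : u ∈ AdjSet m) (hv : v ∈ AdjSet m)
    (huv : (IsClosedPt u ∧ IsOpenPt v) ∨ (IsOpenPt u ∧ IsClosedPt v)) : v ∈ AdjSet u := by
  rw [hm.adjSet_eq] at hu hv
  simp only [IsMixed, IsPure] at hm
  simp only [isClosedPt_iff, isOpenPt_iff] at huv
  simp only [mem_adjSet_iff, khPlane_specializes_iff, mem_khN_iff, ne_eq, Prod.ext_iff]
  rcases hu with rfl | rfl | rfl | rfl <;> rcases hv with rfl | rfl | rfl | rfl <;> omega

theorem IsMixed.specializes_iff_of_mem_adjSet {m a c : ℤ × ℤ} (hm : IsMixed m)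
    (ha : a ∈ AdjSet m) (hc : c ∈ AdjSet m)
    (hac : (IsClosedPt a ∧ IsOpenPt c) ∨ (IsOpenPt a ∧ IsClosedPt c)) :
    (a ⤳ₖ c ↔ a ⤳ₖ m) ∧ (c ⤳ₖ a ↔ m ⤳ₖ a) := by
  rw [hm.adjSet_eq] at ha hc
  simp only [IsMixed, IsPure] at hm
  simp only [isClosedPt_iff, isOpenPt_iff] at hac
  simp only [khPlane_specializes_iff, mem_khN_iff]
  rcases ha with rfl | rfl | rfl | rfl <;> rcases hc with rfl | rfl | rfl | rfl <;> omega

theorem IsMixed.eq_of_mem_adjSet {m m' a b : ℤ × ℤ} (hm : IsMixed m) (hm' : IsMixed m')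
    (ha : a ∈ AdjSet m ∩ AdjSet m') (hb : b ∈ AdjSet m ∩ AdjSet m') (hab : a ≠ b)
    (hp : (IsClosedPt a ∧ IsClosedPt b) ∨ (IsOpenPt a ∧ IsOpenPt b)) : m' = m := by
  obtain ⟨ha, ha'⟩ := ha
  obtain ⟨hb, hb'⟩ := hb
  rw [hm.adjSet_eq] at ha hb
  rw [hm'.adjSet_eq] at ha' hb'
  simp only [IsMixed, IsPure] at hm hm'
  simp only [isClosedPt_iff, isOpenPt_iff] at hp
  simp only [mem_insert_iff, mem_singleton_iff, ne_eq, Prod.ext_iff] at ha' hb' hab ⊢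
  rcases ha with rfl | rfl | rfl | rfl <;> rcases hb with rfl | rfl | rfl | rfl <;> omega

theorem IsMixed.exists_pair_mem_adjSet_inter {m c : ℤ × ℤ} (hm : IsMixed m)
    (hc : c ∈ AdjSet m) : ∃ u v, u ≠ v ∧ u ∈ AdjSet m ∩ AdjSet c ∧ v ∈ AdjSet m ∩ AdjSet c := by
  rw [hm.adjSet_eq] at hc
  simp only [hm.adjSet_eq, mem_inter_iff, mem_insert_iff, mem_singleton_iff, mem_adjSet_iff,
    khPlane_specializes_iff, mem_khN_iff, ne_eq, Prod.ext_iff]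
  simp only [IsMixed, IsPure] at hm
  rcases hc with rfl | rfl | rfl | rfl
  · exact ⟨(m.1 - 1, m.2), (m.1 + 1, m.2), by omega⟩
  · exact ⟨(m.1 - 1, m.2), (m.1 + 1, m.2), by omega⟩
  · exact ⟨(m.1, m.2 - 1), (m.1, m.2 + 1), by omega⟩
  · exact ⟨(m.1, m.2 - 1), (m.1, m.2 + 1), by omega⟩

theorem IsJordanCurve.replace_of_specializes_iff {J : Set (ℤ × ℤ)} {c m : ℤ × ℤ}
    (hJ : IsJordanCurve J) (hc : c ∈ J) (hm : m ∉ J)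
    (hcm : ∀ y ∈ J, y ≠ c → (y ⤳ₖ c ↔ y ⤳ₖ m) ∧ (c ⤳ₖ y ↔ m ⤳ₖ y)) :
    IsJordanCurve ((J \ {c}) ∪ {m}) := by
  classical
  have hJm : (J \ {c}) ∪ {m} = Equiv.swap c m '' J := by
    rw [Equiv.image_swap_of_mem_of_notMem hc hm, union_singleton,
      insert_sdiff_singleton_comm (ne_of_mem_of_not_mem hc hm).symm]
  rw [hJm]
  let := khPlane
  exact hJ.image_of_specializes_iff _ fun x hx y hy => specializes_swap_iff hm hcm hx hy

theorem IsMixed.specializes_iff_of_adjSet_inter_subset {J : Set (ℤ × ℤ)} {m a b c : ℤ × ℤ}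
    (hm : IsMixed m) (hmJ : m ∉ J) (ha : a ∈ AdjSet m) (hb : b ∈ AdjSet m) (hc : c ∈ AdjSet m)
    (hac : (IsClosedPt a ∧ IsOpenPt c) ∨ (IsOpenPt a ∧ IsClosedPt c))
    (hbc : (IsClosedPt b ∧ IsOpenPt c) ∨ (IsOpenPt b ∧ IsClosedPt c))
    (hAm : AdjSet m ∩ J ⊆ {a, b, c}) (hAc : AdjSet c ∩ J ⊆ {a, b}) :
    ∀ y ∈ J, y ≠ c → (y ⤳ₖ c ↔ y ⤳ₖ m) ∧ (c ⤳ₖ y ↔ m ⤳ₖ y) := by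
  intro y hy hyc
  by_cases hya : y = a
  · exact hya ▸ hm.specializes_iff_of_mem_adjSet ha hc hac
  by_cases hyb : y = b
  · exact hyb ▸ hm.specializes_iff_of_mem_adjSet hb hc hbc
  have hyAc : y ∉ AdjSet c := fun h => by
    rcases hAc ⟨h, hy⟩ with h | h <;> contradiction
  have hyAm : y ∉ AdjSet m := fun h => by
    rcases hAm ⟨h, hy⟩ with h | h | h <;> contradiction
  have hym : y ≠ m := ne_of_mem_of_not_mem hy hmJ
  simp only [mem_adjSet_iff, not_and, not_or] at hyAc hyAm
  exact ⟨iff_of_false (hyAc hyc).2 (hyAm hym).2, iff_of_false (hyAc hyc).1 (hyAm hym).1⟩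

theorem notMem_SJ_replace {J : Set (ℤ × ℤ)} {m a b c : ℤ × ℤ}
    (habc : AdjSet m ∩ J = {a, b, c}) : m ∉ SJ ((J \ {c}) ∪ {m}) := by
  have hsub : AdjSet m ∩ ((J \ {c}) ∪ {m}) ⊆ {a, b} := by
    rintro z ⟨hz, ⟨hzJ, hzc⟩ | rfl⟩
    · have hz' : z ∈ ({a, b, c} : Set (ℤ × ℤ)) := habc ▸ ⟨hz, hzJ⟩
      rcases hz' with h | h | h
      exacts [Or.inl h, Or.inr h, absurd h hzc]
    · exact absurd rfl (mem_adjSet_iff.mp hz).1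
  exact fun hm => absurd (hm.2.2.symm.trans_le ((encard_mono hsub).trans (encard_pair_le a b)))
    (by norm_num)

theorem SJ_replace_subset {J : Set (ℤ × ℤ)} {m a b c : ℤ × ℤ} (hm : IsMixed m)
    (hmK : m ∉ SJ ((J \ {c}) ∪ {m})) (ha : a ∈ AdjSet m) (hb : b ∈ AdjSet m) (hab : a ≠ b)
    (hp : (IsClosedPt a ∧ IsClosedPt b) ∨ (IsOpenPt a ∧ IsOpenPt b))
    (hAc : AdjSet c ∩ J ⊆ {a, b}) : SJ ((J \ {c}) ∪ {m}) ⊆ SJ J := by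
  intro m' hm'K
  obtain ⟨hΓ, hm', h3⟩ := hm'K
  have hm'm : m' ≠ m := by rintro rfl; exact hmK ⟨hΓ, hm', h3⟩
  have hΓJ : Γmap ⁻¹' ((J \ {c}) ∪ {m}) ⊆ Γmap ⁻¹' J := by
    rintro z (hz | hz)
    · exact hz.1
    · exact absurd (mem_singleton_iff.mp hz ▸ isPure_Γmap z) hm
  rw [inter_union_distrib_left, inter_singleton_eq_empty.mpr (hm.notMem_adjSet hm'),
    union_empty] at h3
  have hcm' : c ∉ AdjSet m' := by
    intro hc
    obtain ⟨u, v, huv, hu, hv⟩ := hm'.exists_pair_mem_adjSet_inter hc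
    have hJ := diff_singleton_subset_of_encard_inter hm'.encard_adjSet hc h3
    have hu' := hAc ⟨hu.2, hJ ⟨hu.1, (mem_adjSet_iff.mp hu.2).1⟩⟩
    have hv' := hAc ⟨hv.2, hJ ⟨hv.1, (mem_adjSet_iff.mp hv.2).1⟩⟩
    have habm' : a ∈ AdjSet m' ∧ b ∈ AdjSet m' := by
      rcases hu' with rfl | rfl <;> rcases hv' with rfl | rfl
      exacts [absurd rfl huv, ⟨hu.1, hv.1⟩, ⟨hv.1, hu.1⟩, absurd rfl huv]
    exact hm'm (hm.eq_of_mem_adjSet hm' ⟨ha, habm'.1⟩ ⟨hb, habm'.2⟩ hab hp)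
  rw [← inter_sdiff_assoc, sdiff_singleton_eq_self fun h => hcm' h.1] at h3
  exact ⟨ΓStar_mono hΓJ hΓ, hm', h3⟩

/-- For a Jordan curve J with more than four points and m ∈ S_J with
A(m) ∩ J = {a,b,c} where a, b are closed and c is open (or symmetrically),
J_m = (J ∖ {c}) ∪ {m} is a Jordan curve, S_{J_m} ⊆ S_J and m ∉ S_{J_m}. -/
theorem jordan_curve_modification (J : Set (ℤ × ℤ)) (m a b c : ℤ × ℤ)
    (hJ : IsJordanCurve J) (hcard : 4 < J.encard) (hm : m ∈ SJ J)
    (habc : AdjSet m ∩ J = {a, b, c})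
    (hpar : (IsClosedPt a ∧ IsClosedPt b ∧ IsOpenPt c) ∨
      (IsOpenPt a ∧ IsOpenPt b ∧ IsClosedPt c)) :
    IsJordanCurve ((J \ {c}) ∪ {m}) ∧
      SJ ((J \ {c}) ∪ {m}) ⊆ SJ J ∧ m ∉ SJ ((J \ {c}) ∪ {m}) := by
  obtain ⟨-, hmix, h3⟩ := hm
  obtain ⟨hab, hac, hbc⟩ := ne_of_encard_eq_three (habc ▸ h3)
  obtain ⟨ha, hb, hc⟩ : a ∈ AdjSet m ∩ J ∧ b ∈ AdjSet m ∩ J ∧ c ∈ AdjSet m ∩ J := by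
    simp [habc]
  have hmJ : m ∉ J := fun hmJ => by
    rcases hJ.eq_or_eq_of_mem_adjSet hcard hmJ ha hb hab hc with h | h
    exacts [hac h.symm, hbc h.symm]
  have hAc : AdjSet c ∩ J ⊆ {a, b} := fun z hz =>
    hJ.eq_or_eq_of_mem_adjSet hcard hc.2
      ⟨hmix.mem_adjSet_of_mem_adjSet hc.1 ha.1 (by tauto), ha.2⟩
      ⟨hmix.mem_adjSet_of_mem_adjSet hc.1 hb.1 (by tauto), hb.2⟩ hab hz
  have hmK := notMem_SJ_replace habc
  refine ⟨hJ.replace_of_specializes_iff hc.2 hmJ ?_, ?_, hmK⟩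
  · exact hmix.specializes_iff_of_adjSet_inter_subset hmJ ha.1 hb.1 hc.1 (by tauto) (by tauto)
      habc.subset hAc
  · exact SJ_replace_subset hmix hmK ha.1 hb.1 hab (by tauto) hAc
end

section
/- A nonempty subset A ⊆ ℤ² is 4-connected if and only if Γ(A) is a connected subset of K². -/
open TopologicalSpace

/-! ### Auxiliary lemmas -/

lemma mem_khN_self (n : ℤ) : n ∈ khN n := by
  unfold khN; split <;> simp

lemma khN_isOpen (n : ℤ) : khLine.IsOpen (khN n) :=
  TopologicalSpace.GenerateOpen.basic _ ⟨n, rfl⟩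

lemma khLine_even_mem {U : Set ℤ} (hU : khLine.IsOpen U) {n : ℤ}
    (hn : n % 2 = 0) : n ∈ U → (n - 1 ∈ U ∧ n + 1 ∈ U) := by
  have hU' : TopologicalSpace.GenerateOpen (Set.range khN) U := hU
  induction hU' with
  | basic s hs =>
    obtain ⟨m, rfl⟩ := hs
    intro hnU
    unfold khN at hnU ⊢
    by_cases hm : Odd m
    · rw [if_pos hm] at hnU
      simp only [Set.mem_singleton_iff] at hnU
      exfalso; rcases hm with ⟨k, hk⟩; omega
    · rw [if_neg hm] at hnU ⊢
      have hm' : m % 2 = 0 := by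
        rcases Int.even_or_odd m with ⟨k, hk⟩ | h
        · omega
        · exact absurd h hm
      simp only [Set.mem_insert_iff, Set.mem_singleton_iff] at hnU ⊢
      omega
  | univ => intro _; exact ⟨trivial, trivial⟩
  | inter s t hs ht ihs iht =>
    intro hnU
    exact ⟨⟨(ihs hs hnU.1).1, (iht ht hnU.2).1⟩, ⟨(ihs hs hnU.1).2, (iht ht hnU.2).2⟩⟩
  | sUnion S hS ih =>
    rintro ⟨s, hsS, hns⟩
    exact ⟨⟨s, hsS, (ih s hsS (hS s hsS) hns).1⟩, ⟨s, hsS, (ih s hsS (hS s hsS) hns).2⟩⟩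

lemma khPlane_even_box {W : Set (ℤ × ℤ)} (hW : khPlane.IsOpen W) {x : ℤ × ℤ}
    (h1 : x.1 % 2 = 0) (h2 : x.2 % 2 = 0) (hxW : x ∈ W) {z : ℤ × ℤ}
    (hz1 : x.1 - 1 ≤ z.1 ∧ z.1 ≤ x.1 + 1) (hz2 : x.2 - 1 ≤ z.2 ∧ z.2 ≤ x.2 + 1) :
    z ∈ W := by
  letI : TopologicalSpace ℤ := khLine
  have hW' : IsOpen W := hW
  rw [isOpen_prod_iff] at hW'
  obtain ⟨U, V, hU, hV, hxU, hxV, hsub⟩ := hW' x.1 x.2 hxW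
  have hU3 := khLine_even_mem hU h1 hxU
  have hV3 := khLine_even_mem hV h2 hxV
  apply hsub
  refine ⟨?_, ?_⟩
  · rcases (by omega : z.1 = x.1 - 1 ∨ z.1 = x.1 ∨ z.1 = x.1 + 1) with h | h | h <;>
      rw [h]
    exacts [hU3.1, hxU, hU3.2]
  · rcases (by omega : z.2 = x.2 - 1 ∨ z.2 = x.2 ∨ z.2 = x.2 + 1) with h | h | h <;>
      rw [h]
    exacts [hV3.1, hxV, hV3.2]

/-- Minimal basic open boxes in the Khalimsky plane. -/
def khBox (x : ℤ × ℤ) : Set (ℤ × ℤ) := khN x.1 ×ˢ khN x.2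

lemma khBox_isOpen (x : ℤ × ℤ) : khPlane.IsOpen (khBox x) := by
  letI : TopologicalSpace ℤ := khLine
  have h1 : IsOpen (khN x.1) := khN_isOpen x.1
  have h2 : IsOpen (khN x.2) := khN_isOpen x.2
  exact h1.prod h2

lemma mem_khBox_self (x : ℤ × ℤ) : x ∈ khBox x :=
  ⟨mem_khN_self x.1, mem_khN_self x.2⟩

lemma adj4_symm {a b : ℤ × ℤ} (h : Adj4 a b) : Adj4 b a :=
  ⟨fun e => h.1 e.symm, by rw [abs_sub_comm b.1 a.1, abs_sub_comm b.2 a.2]; exact h.2⟩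

lemma adj4_box {a b : ℤ × ℤ} (h : Adj4 a b) :
    ((b.1 + b.2) - (a.1 + a.2) = 1 ∨ (b.1 + b.2) - (a.1 + a.2) = -1) ∧
    ((b.2 - b.1) - (a.2 - a.1) = 1 ∨ (b.2 - b.1) - (a.2 - a.1) = -1) := by
  have h2 := h.2
  rcases abs_cases (a.1 - b.1) with ⟨e1, f1⟩ | ⟨e1, f1⟩ <;>
    rcases abs_cases (a.2 - b.2) with ⟨e2, f2⟩ | ⟨e2, f2⟩ <;>
      rw [e1, e2] at h2 <;> omega

lemma eq_or_adj4_of_mem_box {a c : ℤ × ℤ} (h : Γmap c ∈ khBox (Γmap a)) :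
    c = a ∨ Adj4 a c := by
  obtain ⟨h1, h2⟩ := h
  simp only [Γmap] at h1 h2
  unfold khN at h1 h2
  by_cases hodd : Odd (a.1 + a.2)
  · have hodd2 : Odd (a.2 - a.1) := by
      rcases hodd with ⟨k, hk⟩; exact ⟨k - a.1, by omega⟩
    rw [if_pos hodd] at h1
    rw [if_pos hodd2] at h2
    simp only [Set.mem_singleton_iff] at h1 h2
    left; ext <;> omega
  · have heven2 : ¬ Odd (a.2 - a.1) := by
      rintro ⟨k, hk⟩; exact hodd ⟨k + a.1, by omega⟩
    rw [if_neg hodd] at h1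
    rw [if_neg heven2] at h2
    simp only [Set.mem_insert_iff, Set.mem_singleton_iff] at h1 h2
    have key : (c.1 = a.1 ∧ c.2 = a.2) ∨
        ((c.1 = a.1 + 1 ∨ c.1 = a.1 - 1) ∧ c.2 = a.2) ∨
        (c.1 = a.1 ∧ (c.2 = a.2 + 1 ∨ c.2 = a.2 - 1)) := by omega
    rcases key with ⟨e1, e2⟩ | ⟨e1, e2⟩ | ⟨e1, e2⟩
    · left; ext <;> simp [e1, e2]
    · right
      refine ⟨fun hac => by rw [hac] at e1; omega, ?_⟩
      rw [show a.2 - c.2 = 0 by omega]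
      rcases e1 with e1 | e1
      · rw [show a.1 - c.1 = -1 by omega]; norm_num
      · rw [show a.1 - c.1 = 1 by omega]; norm_num
    · right
      refine ⟨fun hac => by rw [hac] at e2; omega, ?_⟩
      rw [show a.1 - c.1 = 0 by omega]
      rcases e2 with e2 | e2
      · rw [show a.2 - c.2 = -1 by omega]; norm_num
      · rw [show a.2 - c.2 = 1 by omega]; norm_num

/-- A nonempty subset A ⊆ ℤ² is 4-connected iff Γ(A) is connected in the digital plane. -/
theorem conn4_iff_image_connected (A : Set (ℤ × ℤ)) (hA : A.Nonempty) :
    Conn4 A ↔ @IsConnected (ℤ × ℤ) khPlane (Γmap '' A) := by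
  letI : TopologicalSpace ℤ := khLine
  constructor
  · intro h4
    refine ⟨hA.image _, ?_⟩
    intro U V hU hV hcov hne1 hne2
    by_contra hemp
    rw [Set.not_nonempty_iff_eq_empty] at hemp
    apply h4
    refine ⟨{a ∈ A | Γmap a ∈ U}, {a ∈ A | Γmap a ∉ U}, ?_, ?_, ?_, ?_, ?_⟩
    · obtain ⟨u, ⟨a, haA, rfl⟩, huU⟩ := hne1
      exact ⟨a, haA, huU⟩
    · obtain ⟨v, ⟨b, hbA, rfl⟩, hvV⟩ := hne2
      refine ⟨b, hbA, fun hbU => ?_⟩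
      have hm : Γmap b ∈ Γmap '' A ∩ (U ∩ V) := ⟨⟨b, hbA, rfl⟩, hbU, hvV⟩
      rw [hemp] at hm; exact hm
    · ext a; simp only [Set.mem_union, Set.mem_setOf_eq]; tauto
    · ext a; simp only [Set.mem_inter_iff, Set.mem_setOf_eq, Set.mem_empty_iff_false]; tauto
    · rintro a ⟨haA, haU⟩ b ⟨hbA, hbU⟩ hadj
      have hbox := adj4_box hadj
      have hbV : Γmap b ∈ V := by
        rcases hcov ⟨b, hbA, rfl⟩ with h | h
        · exact absurd h hbU
        · exact h
      by_cases hpa : (a.1 + a.2) % 2 = 0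
      · exact hbU (khPlane_even_box hU (x := Γmap a)
          (show (a.1 + a.2) % 2 = 0 from hpa)
          (show (a.2 - a.1) % 2 = 0 by omega) haU (z := Γmap b)
          (show a.1 + a.2 - 1 ≤ b.1 + b.2 ∧ b.1 + b.2 ≤ a.1 + a.2 + 1 by omega)
          (show a.2 - a.1 - 1 ≤ b.2 - b.1 ∧ b.2 - b.1 ≤ a.2 - a.1 + 1 by omega))
      · have hpb : (b.1 + b.2) % 2 = 0 := by omega
        have haV : Γmap a ∈ V := khPlane_even_box hV (x := Γmap b)
          (show (b.1 + b.2) % 2 = 0 from hpb)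
          (show (b.2 - b.1) % 2 = 0 by omega) hbV (z := Γmap a)
          (show b.1 + b.2 - 1 ≤ a.1 + a.2 ∧ a.1 + a.2 ≤ b.1 + b.2 + 1 by omega)
          (show b.2 - b.1 - 1 ≤ a.2 - a.1 ∧ a.2 - a.1 ≤ b.2 - b.1 + 1 by omega)
        have hm : Γmap a ∈ Γmap '' A ∩ (U ∩ V) := ⟨⟨a, haA, rfl⟩, haU, haV⟩
        rw [hemp] at hm; exact hm
  · intro hconn
    rintro ⟨X, Y, ⟨x, hx⟩, ⟨y, hy⟩, hun, hint, hadj⟩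
    have hdis : ∀ c, c ∈ X → c ∈ Y → False := fun c h1 h2 =>
      Set.eq_empty_iff_forall_notMem.mp hint c ⟨h1, h2⟩
    obtain ⟨z, ⟨c, hcA, rfl⟩, hz1, hz2⟩ := hconn.2
      (⋃ a ∈ X, khBox (Γmap a)) (⋃ b ∈ Y, khBox (Γmap b))
      (isOpen_biUnion fun a _ => khBox_isOpen _)
      (isOpen_biUnion fun b _ => khBox_isOpen _)
      (by
        rintro _ ⟨c, hcA, rfl⟩
        rw [← hun] at hcA
        rcases hcA with hcX | hcY
        · exact Or.inl (Set.mem_biUnion hcX (mem_khBox_self _))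
        · exact Or.inr (Set.mem_biUnion hcY (mem_khBox_self _)))
      ⟨Γmap x, ⟨x, by rw [← hun]; exact Or.inl hx, rfl⟩,
        Set.mem_biUnion hx (mem_khBox_self _)⟩
      ⟨Γmap y, ⟨y, (by rw [← hun]; exact Set.mem_union_right _ hy), rfl⟩,
        Set.mem_biUnion hy (mem_khBox_self _)⟩
    simp only [Set.mem_iUnion] at hz1 hz2
    obtain ⟨a, haX, hza⟩ := hz1
    obtain ⟨b, hbY, hzb⟩ := hz2
    have hcXY : c ∈ X ∨ c ∈ Y := by rw [← hun] at hcA; exact hcA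
    rcases hcXY with hcX | hcY
    · rcases eq_or_adj4_of_mem_box hzb with hcb | hcb
      · exact hdis c hcX (hcb ▸ hbY)
      · exact hadj c hcX b hbY (adj4_symm hcb)
    · rcases eq_or_adj4_of_mem_box hza with hca | hca
      · exact hdis c (hca ▸ haX) hcY
      · exact hadj a haX c hcY hca
end
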